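/- arXiv:2009.03430 — 5 statements merged into one kernel-verified Lean document; each statement's English description precedes it below -/
import Mathlib

section
/- Let T be a tree on vertex set {1,…,n} (a connected acyclic simple graph with n vertices and hence n−1 edges). For ANY ordering e_1, …, e_{n−1} of the edges of T, the product of the corresponding transpositions (regarding each edge {a,b} as the transposition (a b)) is an n-cycle in S_n. -/
/-!
Induct on the number of edges of an acyclic graph whose non-isolated vertices are pairwise
connected: the product over its edges, in any order, is a cycle moving exactly those vertices.
Pick a leaf `v` with neighbour `u` and split the edge list as `A ++ {v,u} :: B`. Since `v` lies on
no edge of `B`, the transposition `(v u)` moves to the right through the product `P` of `B` as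
`(w v)` with `w = P⁻¹ u`, so the product is `σ * (w v)` with `σ` the product over `A ++ B`, the
edges left after deleting the leaf edge. By induction `σ` is a cycle moving exactly the remaining
non-isolated vertices; so it moves `w` and fixes `v`, and multiplying it by `(w v)` inserts `v`.
-/

/-- The transposition associated to an edge (an unordered pair) of a graph. -/
def edgeSwap {n : ℕ} : Sym2 (Fin n) → Equiv.Perm (Fin n) :=
  Sym2.lift ⟨fun a b => Equiv.swap a b, fun a b => Equiv.swap_comm a b⟩

open Equiv SimpleGraph

namespace Equiv.Perm

variable {α : Type*} [DecidableEq α] {σ : Perm α} {a b : α}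

theorem mul_swap_apply_ne_self_iff (ha : σ a ≠ a) (hb : σ b = b) (x : α) :
    (σ * swap a b) x ≠ x ↔ σ x ≠ x ∨ x = b := by
  have hab : a ≠ b := fun h => ha (h ▸ hb)
  rcases eq_or_ne x a with rfl | hxa
  · simp [hb, hab.symm, ha]
  rcases eq_or_ne x b with rfl | hxb
  · simp only [Perm.mul_apply, swap_apply_right, or_true, iff_true]
    exact fun h => hab (σ.injective (h.trans hb.symm))
  · simp [swap_apply_of_ne_of_ne hxa hxb, hxb]

theorem IsCycle.mul_swap [Finite α] (hσ : σ.IsCycle) (ha : σ a ≠ a) (hb : σ b = b) :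
    (σ * swap a b).IsCycle := by
  set τ := σ * swap a b
  have hab : a ≠ b := fun h => ha (h ▸ hb)
  have hτa : τ a = b := by simp [τ, hb]
  have hτb : τ b = σ a := by simp [τ]
  have hτ : ∀ x, x ≠ a → x ≠ b → τ x = σ x := fun x hxa hxb => by
    simp [τ, swap_apply_of_ne_of_ne hxa hxb]
  -- `τ` follows `σ` except that it takes the detour `a ↦ b ↦ σ a`.
  have hinv : ∀ y, τ.SameCycle a y → τ.SameCycle a (σ y) := by
    intro y hy
    rcases eq_or_ne y a with rfl | hya
    · rw [← hτb, ← hτa]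
      exact sameCycle_apply_right.2 (sameCycle_apply_right.2 hy)
    rcases eq_or_ne y b with rfl | hyb
    · rwa [hb]
    · rw [← hτ y hya hyb]
      exact sameCycle_apply_right.2 hy
  have horbit : ∀ m : ℕ, τ.SameCycle a ((σ ^ m) a) := fun m => by
    induction m with
    | zero => exact SameCycle.refl _ _
    | succ m ih => rw [pow_succ', mul_apply]; exact hinv _ ih
  refine ⟨a, by rw [hτa]; exact hab.symm, fun y hy => ?_⟩
  rcases eq_or_ne y b with rfl | hyb
  · rw [← hτa]
    exact sameCycle_apply_right.2 (SameCycle.refl _ _)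
  have hσy : σ y ≠ y := by
    rcases eq_or_ne y a with rfl | hya
    exacts [ha, hτ y hya hyb ▸ hy]
  obtain ⟨m, rfl⟩ := hσ.exists_pow_eq ha hσy
  exact horbit m

end Equiv.Perm

namespace Sym2

variable {α : Type*} [DecidableEq α]

def toPerm : Sym2 α → Perm α :=
  Sym2.lift ⟨fun a b => swap a b, fun a b => swap_comm a b⟩

@[simp]
theorem toPerm_mk (a b : α) : toPerm s(a, b) = swap a b := rfl

theorem toPerm_apply_of_notMem {e : Sym2 α} {x : α} (hx : x ∉ e) : e.toPerm x = x := by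
  induction e using Sym2.ind with
  | _ a b =>
    exact swap_apply_of_ne_of_ne (fun h => hx (h ▸ mem_mk_left a b))
      (fun h => hx (h ▸ mem_mk_right a b))

theorem prod_map_toPerm_apply_of_forall_notMem {L : List (Sym2 α)} {x : α}
    (hx : ∀ e ∈ L, x ∉ e) : (L.map toPerm).prod x = x := by
  induction L with
  | nil => rfl
  | cons e L ih =>
    rw [List.forall_mem_cons] at hx
    rw [List.map_cons, List.prod_cons, Perm.mul_apply, ih hx.2, toPerm_apply_of_notMem hx.1]

theorem prod_map_toPerm_middle {A B : List (Sym2 α)} {u v : α}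
    (hv : (B.map toPerm).prod v = v) :
    ((A ++ s(v, u) :: B).map toPerm).prod =
      ((A ++ B).map toPerm).prod * swap ((B.map toPerm).prod⁻¹ u) v := by
  set P := (B.map toPerm).prod
  have hcomm : swap v u * P = P * swap (P⁻¹ u) v := by
    rw [mul_swap_eq_swap_mul, Perm.coe_inv, apply_symm_apply, hv, swap_comm]
  simp only [List.map_append, List.map_cons, List.prod_append, List.prod_cons, toPerm_mk,
    ← hcomm, P, mul_assoc]

theorem isCycle_prod_map_toPerm_middle [Finite α] {A B : List (Sym2 α)} {u v : α} {S : Set α}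
    (hcyc : ((A ++ B).map toPerm).prod.IsCycle)
    (hmoved : ∀ x, ((A ++ B).map toPerm).prod x ≠ x ↔ x ∈ S)
    (hv : v ∉ S) (hu : u ∈ S) (hB : ∀ e ∈ B, ∀ x ∈ e, x ∈ S) :
    ((A ++ s(v, u) :: B).map toPerm).prod.IsCycle ∧
      ∀ x, ((A ++ s(v, u) :: B).map toPerm).prod x ≠ x ↔ x ∈ insert v S := by
  set P := (B.map toPerm).prod
  have hfixB : ∀ z ∉ S, P z = z := fun z hz =>
    prod_map_toPerm_apply_of_forall_notMem fun e he hze => hz (hB e he z hze)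
  have hw : P⁻¹ u ∈ S := by
    by_contra hw
    have hwu := hfixB _ hw
    rw [show P (P⁻¹ u) = u by simp] at hwu
    exact hw (hwu ▸ hu)
  have hσw := (hmoved _).2 hw
  have hσv : ((A ++ B).map toPerm).prod v = v := not_not.1 fun h => hv ((hmoved v).1 h)
  rw [prod_map_toPerm_middle (hfixB v hv)]
  refine ⟨hcyc.mul_swap hσw hσv, fun x => ?_⟩
  rw [Perm.mul_swap_apply_ne_self_iff hσw hσv, hmoved, Set.mem_insert_iff, or_comm]

end Sym2

namespace SimpleGraph

section

variable {α : Type*} {G : SimpleGraph α}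

theorem mem_support_iff_exists_mem_edgeSet {x : α} : x ∈ G.support ↔ ∃ e ∈ G.edgeSet, x ∈ e := by
  refine ⟨fun ⟨w, hw⟩ => ⟨s(x, w), hw, Sym2.mem_mk_left x w⟩, fun ⟨e, he, hx⟩ => ?_⟩
  induction e using Sym2.ind with
  | _ a b =>
    rcases Sym2.mem_iff.1 hx with rfl | rfl
    exacts [he.mem_support_left, he.mem_support_right]

theorem IsAcyclic.exists_adj_forall_adj_eq [Finite G.edgeSet] (hG : G.IsAcyclic)
    (hne : G.edgeSet.Nonempty) : ∃ v u, G.Adj v u ∧ ∀ w, G.Adj v w → w = u := by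
  obtain ⟨e, he⟩ := hne
  induction e using Sym2.ind with
  | _ x y =>
  have hxy : G.Adj x y := he
  have : Nonempty α := ⟨x⟩
  obtain ⟨v, v', p, hp, hmax⟩ := Walk.exists_isPath_forall_isPath_length_le_length G
  have hnil : ¬p.Nil := fun h => by
    have := hmax _ _ (Walk.cons hxy Walk.nil) (Walk.IsPath.nil.cons (by simp [hxy.ne]))
    simp [h.length_eq_zero] at this
  refine ⟨v, p.snd, p.adj_snd hnil, fun w hw => hG.eq_snd_of_adj_start hp hw ?_⟩
  by_contra hwp
  have := hmax _ _ (Walk.cons hw.symm p) (hp.cons hwp)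
  simp at this

theorem mem_append_iff_mem_edgeSet_deleteEdges {A B : List (Sym2 α)} {a : Sym2 α}
    (hL : (A ++ a :: B).Nodup) (hLG : ∀ e, e ∈ A ++ a :: B ↔ e ∈ G.edgeSet) (e : Sym2 α) :
    e ∈ A ++ B ↔ e ∈ (G.deleteEdges {a}).edgeSet := by
  have ha : a ∉ A ++ B := (List.nodup_cons.1 (List.nodup_middle.1 hL)).1
  rw [edgeSet_deleteEdges, Set.mem_sdiff, ← hLG, Set.mem_singleton_iff]
  simp only [List.mem_append, List.mem_cons] at ha ⊢
  grind

variable {u v : α}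

theorem Reachable.deleteEdges_of_forall_adj_eq (hleaf : ∀ w, G.Adj v w → w = u) {x y : α}
    (hx : x ≠ v) (hy : y ≠ v) (h : G.Reachable x y) :
    (G.deleteEdges {s(v, u)}).Reachable x y := by
  obtain ⟨p, hp⟩ := h.exists_isPath
  have hvp : v ∉ p.support := hp.isTrail.not_mem_support_of_subsingleton_neighborSet hx.symm
    hy.symm fun w hw w' hw' => (hleaf w hw).trans (hleaf w' hw').symm
  refine ⟨p.toDeleteEdges _ fun e he hev => hvp ?_⟩
  rw [Set.mem_singleton_iff] at hev
  exact p.fst_mem_support_of_mem_edges (hev ▸ he)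

theorem support_deleteEdges_of_forall_adj_eq
    (hconn : ∀ x ∈ G.support, ∀ y ∈ G.support, G.Reachable x y)
    (hvu : G.Adj v u) (hleaf : ∀ w, G.Adj v w → w = u)
    (hne : (G.deleteEdges {s(v, u)}).edgeSet.Nonempty) :
    (G.deleteEdges {s(v, u)}).support = G.support \ {v} := by
  set G' := G.deleteEdges {s(v, u)}
  have hle : G'.support ⊆ G.support := support_mono (deleteEdges_le _)
  have hv : v ∉ G'.support := fun hv => by
    obtain ⟨w, hw⟩ := G'.mem_support.1 hv
    rw [deleteEdges_adj, hleaf w hw.1] at hw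
    exact hw.2 rfl
  -- `u` survives: it is joined inside `G'` to any vertex of an edge of `G'`.
  have hu : u ∈ G'.support := by
    obtain ⟨a, ha⟩ : G'.support.Nonempty := by
      obtain ⟨e, he⟩ := hne
      exact ⟨_, mem_support_iff_exists_mem_edgeSet.2 ⟨e, he, e.out_fst_mem⟩⟩
    rcases eq_or_ne u a with rfl | hua
    · exact ha
    exact mem_support_of_reachable hua <| Reachable.deleteEdges_of_forall_adj_eq hleaf hvu.ne'
      (ne_of_mem_of_not_mem ha hv) (hconn u hvu.mem_support_right a (hle ha))
  ext x
  refine ⟨fun hx => ⟨hle hx, fun h => hv (h ▸ hx)⟩, fun ⟨⟨w, hxw⟩, hxv⟩ => ?_⟩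
  rcases eq_or_ne x u with rfl | hxu
  · exact hu
  refine ⟨w, deleteEdges_adj.2 ⟨hxw, fun h => ?_⟩⟩
  rcases Sym2.mem_iff.1 (Set.mem_singleton_iff.1 h ▸ Sym2.mem_mk_left x w) with hx | hx
  exacts [hxv hx, hxu hx]

end

theorem IsAcyclic.isCycle_prod_map_toPerm {α : Type*} [Finite α] [DecidableEq α]
    {G : SimpleGraph α} (hG : G.IsAcyclic)
    (hconn : ∀ x ∈ G.support, ∀ y ∈ G.support, G.Reachable x y)
    {L : List (Sym2 α)} (hL : L.Nodup) (hLG : ∀ e, e ∈ L ↔ e ∈ G.edgeSet) (hne : L ≠ []) :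
    (L.map Sym2.toPerm).prod.IsCycle ∧
      ∀ x, (L.map Sym2.toPerm).prod x ≠ x ↔ x ∈ G.support := by
  obtain ⟨e, he⟩ := List.exists_mem_of_ne_nil L hne
  obtain ⟨v, u, hvu, hleaf⟩ := hG.exists_adj_forall_adj_eq ⟨e, (hLG e).1 he⟩
  obtain ⟨A, B, rfl⟩ := List.append_of_mem ((hLG s(v, u)).2 hvu)
  set G' := G.deleteEdges {s(v, u)}
  have hG'L : ∀ e, e ∈ A ++ B ↔ e ∈ G'.edgeSet := mem_append_iff_mem_edgeSet_deleteEdges hL hLG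
  rcases eq_or_ne (A ++ B) [] with hnil | hnil
  · obtain ⟨rfl, rfl⟩ := List.append_eq_nil_iff.1 hnil
    refine ⟨by simpa using Perm.isCycle_swap hvu.ne, fun x => ?_⟩
    simp [mem_support_iff_exists_mem_edgeSet, ← hLG, swap_apply_ne_self_iff, hvu.ne]
  obtain ⟨e', he'⟩ := List.exists_mem_of_ne_nil _ hnil
  have hsupp : G'.support = G.support \ {v} :=
    support_deleteEdges_of_forall_adj_eq hconn hvu hleaf ⟨e', (hG'L e').1 he'⟩
  have hconn' : ∀ x ∈ G'.support, ∀ y ∈ G'.support, G'.Reachable x y := by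
    rw [hsupp]
    exact fun x ⟨hx, hxv⟩ y ⟨hy, hyv⟩ =>
      Reachable.deleteEdges_of_forall_adj_eq hleaf hxv hyv (hconn x hx y hy)
  obtain ⟨hcyc, hmoved⟩ :=
    IsAcyclic.isCycle_prod_map_toPerm (IsAcyclic.anti (deleteEdges_le _) hG) hconn'
      (List.nodup_middle.1 hL).of_cons hG'L hnil
  have hS x := Set.ext_iff.1 hsupp x
  have hstep := Sym2.isCycle_prod_map_toPerm_middle (v := v) (u := u) hcyc
    (fun x => (hmoved x).trans (hS x)) (by simp) ⟨hvu.mem_support_right, hvu.ne'⟩ fun e he x hx => (hS x).1 <|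
      mem_support_iff_exists_mem_edgeSet.2 ⟨e, (hG'L e).1 (List.mem_append_right A he), hx⟩
  rwa [Set.insert_sdiff_singleton, Set.insert_eq_of_mem hvu.mem_support_left] at hstep
termination_by L.length
decreasing_by all_goals subst_vars; simp

end SimpleGraph

theorem stmt7 {n : ℕ} (hn : 2 ≤ n) (T : SimpleGraph (Fin n)) (hT : T.IsTree)
    (L : List (Sym2 (Fin n))) (hnd : L.Nodup)
    (hedges : ∀ e : Sym2 (Fin n), e ∈ L ↔ e ∈ T.edgeSet) :
    ((L.map edgeSwap).prod).IsCycle ∧ ((L.map edgeSwap).prod).support.card = n := by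
  have : Nontrivial (Fin n) := Fin.nontrivial_iff_two_le.2 hn
  have hsupp : T.support = Set.univ := hT.connected.preconnected.support_eq_univ
  obtain ⟨y, hy⟩ := T.mem_support.1 (hsupp ▸ Set.mem_univ (⟨0, by omega⟩ : Fin n))
  have hne : L ≠ [] := List.ne_nil_of_mem ((hedges s(_, y)).2 hy)
  obtain ⟨hcyc, hmoved⟩ := hT.isAcyclic.isCycle_prod_map_toPerm
    (fun x _ y _ => hT.connected.preconnected x y) hnd hedges hne
  refine ⟨hcyc, ?_⟩
  have : (L.map Sym2.toPerm).prod.support = Finset.univ := by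
    ext x
    simp [hmoved, hsupp]
  rw [show L.map edgeSwap = L.map Sym2.toPerm from rfl, this, Finset.card_univ, Fintype.card_fin]
end

section
/- Let e_1, …, e_{n−1} be n−1 edges (2-element subsets) of {1,…,n} such that some ordering of the corresponding transpositions multiplies to an n-cycle. Then the graph on {1,…,n} with edge set {e_1, …, e_{n−1}} is a spanning tree of the complete graph K_n. -/
/-!
The product `σ` of the transpositions moves every vertex `v` to a vertex reachable from `v` in the
graph `G` spanned by the edges, and so does every power of `σ`. As `σ` is a cycle moving all `n`
vertices, any two vertices are related by a power of `σ`, so `G` is connected. A connected graph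
on `n` vertices with at most `n - 1` edges is a tree.
-/

open Equiv

namespace SimpleGraph

variable {V : Type*} (G : SimpleGraph V)

def reachablePerms : Submonoid (Perm V) where
  carrier := {f | ∀ v, G.Reachable v (f v)}
  one_mem' v := Reachable.refl v
  mul_mem' hf hg v := (hg v).trans (hf _)

variable {G}

lemma swap_mem_reachablePerms [DecidableEq V] {a b : V} (h : G.Reachable a b) :
    swap a b ∈ G.reachablePerms := by
  intro v
  rcases eq_or_ne v a with rfl | hva
  · simpa using h
  rcases eq_or_ne v b with rfl | hvb
  · simpa using h.symm
  · simp [swap_apply_of_ne_of_ne hva hvb]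

lemma connected_of_isCycle_of_support_eq_univ [Fintype V] [DecidableEq V] {σ : Perm V}
    (hσ : σ ∈ G.reachablePerms) (hcyc : σ.IsCycle) (hsupp : σ.support = Finset.univ) :
    G.Connected := by
  have ⟨x, _, _⟩ := hcyc
  have hmoves (v : V) : σ v ≠ v := Perm.mem_support.mp (hsupp ▸ Finset.mem_univ v)
  refine (connected_iff G).mpr ⟨fun v w => ?_, ⟨x⟩⟩
  obtain ⟨k, rfl⟩ := hcyc.exists_pow_eq (hmoves v) (hmoves w)
  exact G.reachablePerms.pow_mem hσ k v

lemma Connected.isTree_of_card_edgeSet_add_one_le [Finite V] (h : G.Connected)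
    (hcard : Nat.card G.edgeSet + 1 ≤ Nat.card V) : G.IsTree :=
  isTree_iff_connected_and_card.mpr ⟨h, hcard.antisymm h.card_vert_le_card_edgeSet_add_one⟩

lemma card_edgeSet_fromEdgeSet_range_le {ι : Type*} [Finite ι] (e : ι → Sym2 V) :
    Nat.card (fromEdgeSet (Set.range e)).edgeSet ≤ Nat.card ι :=
  calc Nat.card (fromEdgeSet (Set.range e)).edgeSet
      ≤ Nat.card (Set.range e) := by
        rw [edgeSet_fromEdgeSet]
        exact Nat.card_mono (Set.finite_range e) Set.sdiff_subset
    _ ≤ Nat.card ι := Finite.card_range_le e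

end SimpleGraph

open SimpleGraph

lemma edgeSwap_mem_reachablePerms {n : ℕ} {S : Set (Sym2 (Fin n))} {s : Sym2 (Fin n)}
    (hs : s ∈ S) : edgeSwap s ∈ (fromEdgeSet S).reachablePerms := by
  induction s using Sym2.ind with
  | h a b =>
    refine swap_mem_reachablePerms ?_
    rcases eq_or_ne a b with rfl | hab
    · rfl
    · exact Adj.reachable ((fromEdgeSet_adj S).mpr ⟨hs, hab⟩)

theorem stmt8_general {n : ℕ} (e : Fin (n - 1) → Sym2 (Fin n))
    (hord : ∃ π : Equiv.Perm (Fin (n - 1)),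
      ((List.ofFn (fun k => edgeSwap (e (π k)))).prod).IsCycle ∧
      ((List.ofFn (fun k => edgeSwap (e (π k)))).prod).support.card = n) :
    (SimpleGraph.fromEdgeSet (Set.range e)).IsTree := by
  obtain ⟨π, hcyc, hcard⟩ := hord
  have hmem : (List.ofFn fun k => edgeSwap (e (π k))).prod ∈
      (fromEdgeSet (Set.range e)).reachablePerms := by
    refine Submonoid.list_prod_mem _ fun f hf => ?_
    obtain ⟨k, rfl⟩ := (List.mem_ofFn' _ f).mp hf
    exact edgeSwap_mem_reachablePerms ⟨π k, rfl⟩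
  have hconn := connected_of_isCycle_of_support_eq_univ hmem hcyc
    (Finset.eq_univ_of_card _ (by simpa using hcard))
  have hn : 0 < n := Fin.pos_iff_nonempty.mpr hconn.nonempty
  refine hconn.isTree_of_card_edgeSet_add_one_le ?_
  have hedges := card_edgeSet_fromEdgeSet_range_le e
  simp only [Nat.card_eq_fintype_card, Fintype.card_fin] at hedges ⊢
  omega

theorem stmt8 {n : ℕ} (e : Fin (n - 1) → Sym2 (Fin n))
    (hne : ∀ k, ¬ (e k).IsDiag)
    (hord : ∃ π : Equiv.Perm (Fin (n - 1)),
      ((List.ofFn (fun k => edgeSwap (e (π k)))).prod).IsCycle ∧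
      ((List.ofFn (fun k => edgeSwap (e (π k)))).prod).support.card = n) :
    (SimpleGraph.fromEdgeSet (Set.range e)).IsTree :=
  stmt8_general e hord
end

section
/- Let Γ be a subset of the standard basis {Ω_ij : 1 ≤ i < j ≤ n} of so(n), and let G be the simple graph on vertices {1,…,n} with an edge {i,j} for each Ω_ij ∈ Γ. Then the Lie algebra generated by Γ equals so(n) if and only if G is connected. -/
open Matrix
attribute [local instance 100] LieRing.ofAssociativeRing

/-- The standard basis element `Ω i j = E i j - E j i` of `so(n)`. -/
def Omega {n : ℕ} (i j : Fin n) : Matrix (Fin n) (Fin n) ℝ :=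
  Matrix.single i j 1 - Matrix.single j i 1

/-!
For a connected graph, every `Ω i j` is obtained from the generators by iterating
`⁅Ω a b, Ω b c⁆ = Ω a c` along a path from `i` to `j`, and the `Ω i j` span `so(n)`.
Conversely, the matrices that are block diagonal with respect to the connected components form a
Lie subalgebra containing the generators, and it misses `Ω i j ∈ so(n)` when `i` and `j` lie in
different components.
-/

open LieAlgebra.Orthogonal

section Omega

variable {n : ℕ}

lemma Omega_apply (i j k l : Fin n) :
    Omega i j k l = (if i = k ∧ j = l then 1 else 0) - (if j = k ∧ i = l then 1 else 0) := by
  simp [Omega, single_apply]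

@[simp]
lemma Omega_self (i : Fin n) : Omega i i = 0 :=
  sub_self _

lemma Omega_swap (i j : Fin n) : Omega j i = -Omega i j :=
  (neg_sub _ _).symm

lemma Omega_mem_so (i j : Fin n) : Omega i j ∈ so (Fin n) ℝ := by
  simp [mem_so, Omega, transpose_single]

lemma Omega_lie_Omega {i j k : Fin n} (hij : i ≠ j) (hjk : j ≠ k) (hik : i ≠ k) :
    ⁅Omega i j, Omega j k⁆ = Omega i k := by
  simp only [Ring.lie_def, Omega, sub_mul, mul_sub, single_mul_single_same, one_mul,
    single_mul_single_of_ne _ _ _ _ hij, single_mul_single_of_ne _ _ _ _ hjk,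
    single_mul_single_of_ne _ _ _ _ hik, single_mul_single_of_ne _ _ _ _ hij.symm,
    single_mul_single_of_ne _ _ _ _ hjk.symm, single_mul_single_of_ne _ _ _ _ hik.symm]
  abel

lemma eq_sum_Omega_of_transpose_eq_neg {A : Matrix (Fin n) (Fin n) ℝ} (hA : Aᵀ = -A) :
    A = ∑ i, ∑ j, (A i j / 2) • Omega i j := by
  ext k l
  have hlk : A l k = -A k l := by simpa using congr_fun₂ hA k l
  simp only [Omega, Matrix.sum_apply, Matrix.smul_apply, Matrix.sub_apply, single_apply, ite_and,
    smul_eq_mul, mul_sub, mul_ite, mul_one, mul_zero, Finset.sum_sub_distrib, Finset.sum_ite_irrel,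
    Finset.sum_ite_eq', Finset.mem_univ, ↓reduceIte, Finset.sum_const_zero, hlk]
  ring

lemma so_le_of_forall_Omega_mem {L : LieSubalgebra ℝ (Matrix (Fin n) (Fin n) ℝ)}
    (hL : ∀ i j, Omega i j ∈ L) : so (Fin n) ℝ ≤ L := fun A hA => by
  rw [eq_sum_Omega_of_transpose_eq_neg ((mem_so _ _ A).mp hA)]
  exact sum_mem fun i _ => sum_mem fun j _ => L.smul_mem _ (hL i j)

lemma Omega_mem_of_reachable {L : LieSubalgebra ℝ (Matrix (Fin n) (Fin n) ℝ)}
    {G : SimpleGraph (Fin n)} (hG : ∀ a b, G.Adj a b → Omega a b ∈ L) {i j : Fin n}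
    (h : G.Reachable i j) : Omega i j ∈ L := by
  obtain ⟨w⟩ := h
  induction w with
  | nil => simp
  | @cons a b c hab _ ih =>
    by_cases hac : a = c
    · simp [hac]
    by_cases hbc : b = c
    · exact hbc ▸ hG a b hab
    rw [← Omega_lie_Omega hab.ne hbc hac]
    exact L.lie_mem (hG a b hab) ih

end Omega

section BlockDiagonal

variable {ι R : Type*} [Fintype ι] [CommRing R] {s : Setoid ι}

lemma Matrix.mul_apply_eq_zero_of_not_rel {x y : Matrix ι ι R}
    (hx : ∀ k l, ¬s k l → x k l = 0) (hy : ∀ k l, ¬s k l → y k l = 0) {k l : ι}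
    (hkl : ¬s k l) : (x * y) k l = 0 := by
  rw [mul_apply]
  refine Finset.sum_eq_zero fun m _ => ?_
  by_cases hkm : s k m
  · rw [hy m l fun hml => hkl (s.trans hkm hml), mul_zero]
  · rw [hx k m hkm, zero_mul]

variable (R) in
def Matrix.blockDiagonalLieSubalgebra [DecidableEq ι] (s : Setoid ι) :
    LieSubalgebra R (Matrix ι ι R) where
  carrier := {A | ∀ k l, ¬s k l → A k l = 0}
  add_mem' ha hb k l h := by simp [ha k l h, hb k l h]
  zero_mem' _ _ _ := rfl
  smul_mem' c _ ha k l h := by simp [ha k l h]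
  lie_mem' hx hy k l h := by
    rw [Ring.lie_def, sub_apply, mul_apply_eq_zero_of_not_rel hx hy h,
      mul_apply_eq_zero_of_not_rel hy hx h, sub_zero]

end BlockDiagonal

lemma reachable_of_Omega_mem_blockDiagonal {n : ℕ} {G : SimpleGraph (Fin n)} {i j : Fin n}
    (h : Omega i j ∈ blockDiagonalLieSubalgebra ℝ G.reachableSetoid) : G.Reachable i j := by
  by_contra hij
  have hne : i ≠ j := fun e => hij (e ▸ .rfl)
  simpa [Omega_apply, hne.symm] using h i j hij

lemma lieSpan_le_blockDiagonal {n : ℕ} {Γ : Set (Matrix (Fin n) (Fin n) ℝ)}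
    (hΓ : Γ ⊆ {M | ∃ i j : Fin n, i < j ∧ M = Omega i j}) :
    LieSubalgebra.lieSpan ℝ _ Γ ≤ blockDiagonalLieSubalgebra ℝ
      (SimpleGraph.fromRel fun i j : Fin n => Omega i j ∈ Γ).reachableSetoid := by
  refine LieSubalgebra.lieSpan_le.mpr fun M hM k l hkl => ?_
  obtain ⟨a, b, hab, rfl⟩ := hΓ hM
  have hadj : (SimpleGraph.fromRel fun i j : Fin n => Omega i j ∈ Γ).Adj a b :=
    (SimpleGraph.fromRel_adj _ _ _).mpr ⟨hab.ne, .inl hM⟩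
  rw [Omega_apply, if_neg, if_neg, sub_zero]
  · rintro ⟨rfl, rfl⟩; exact hkl hadj.symm.reachable
  · rintro ⟨rfl, rfl⟩; exact hkl hadj.reachable

theorem stmt13 {n : ℕ} (hn : 0 < n) (Γ : Set (Matrix (Fin n) (Fin n) ℝ))
    (hΓ : Γ ⊆ {M | ∃ i j : Fin n, i < j ∧ M = Omega i j}) :
    ((LieSubalgebra.lieSpan ℝ (Matrix (Fin n) (Fin n) ℝ) Γ : Set (Matrix (Fin n) (Fin n) ℝ)) =
        {A : Matrix (Fin n) (Fin n) ℝ | Aᵀ = -A}) ↔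
      (SimpleGraph.fromRel (fun i j : Fin n => Omega i j ∈ Γ)).Connected := by
  have hso : {A : Matrix (Fin n) (Fin n) ℝ | Aᵀ = -A} = so (Fin n) ℝ := by
    ext A; exact (mem_so _ _ A).symm
  rw [hso, SetLike.coe_set_eq]
  constructor
  · intro h
    have : Nonempty (Fin n) := ⟨⟨0, hn⟩⟩
    exact ⟨fun i j => reachable_of_Omega_mem_blockDiagonal
      (lieSpan_le_blockDiagonal hΓ (h ▸ Omega_mem_so i j))⟩
  · intro hconn
    refine le_antisymm (LieSubalgebra.lieSpan_le.mpr fun M hM => ?_)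
      (so_le_of_forall_Omega_mem fun i j => Omega_mem_of_reachable (fun a b hab => ?_)
        (hconn.preconnected i j))
    · obtain ⟨a, b, -, rfl⟩ := hΓ hM
      exact Omega_mem_so a b
    · obtain ⟨-, hab | hba⟩ := (SimpleGraph.fromRel_adj _ _ _).mp hab
      · exact LieSubalgebra.subset_lieSpan hab
      · exact Omega_swap b a ▸ neg_mem (LieSubalgebra.subset_lieSpan hba)
end

section
/- If Γ ⊆ {Ω_ij : 1 ≤ i < j ≤ n} generates so(n) as a Lie algebra, then |Γ| ≥ n − 1. -/
open Matrix
attribute [local instance 100] LieRing.ofAssociativeRing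

/-!
Let `W ⊆ ℝⁿ` be the span of the vectors `M 𝟙`, `M ∈ Γ`; as `Ω i j 𝟙 = e i - e j`, `dim W ≤ |Γ|`.
The relation `e i - e j ∈ W` is transitive, and matrices supported on a transitive relation are
closed under commutators, so they form a Lie subalgebra containing `Γ`, hence all of `so(n)`.
As `Ω i j` has a nonzero `(i, j)` entry, every `e i - e j` lies in `W`; these span a hyperplane,
so `dim W ≥ n - 1`.
-/

namespace Matrix

variable {ι K : Type*} [Fintype ι] [CommRing K]

lemma mul_apply_eq_zero_of_support {R : ι → ι → Prop} [IsTrans ι R]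
    {A B : Matrix ι ι K} (hA : ∀ p q, ¬ R p q → A p q = 0) (hB : ∀ p q, ¬ R p q → B p q = 0)
    {p q : ι} (hpq : ¬ R p q) : (A * B) p q = 0 := by
  refine Finset.sum_eq_zero fun k _ => ?_
  by_cases hpk : R p k
  · simp only [hB k q fun hkq => hpq (_root_.trans hpk hkq), mul_zero]
  · simp only [hA p k hpk, zero_mul]

def supportLieSubalgebra [DecidableEq ι] (R : ι → ι → Prop) [IsTrans ι R] :
    LieSubalgebra K (Matrix ι ι K) where
  carrier := {A | ∀ p q, ¬ R p q → A p q = 0}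
  add_mem' hA hB p q h := by rw [add_apply, hA p q h, hB p q h, add_zero]
  zero_mem' _ _ _ := rfl
  smul_mem' c A hA p q h := by rw [smul_apply, hA p q h, smul_zero]
  lie_mem' hA hB p q h := by
    rw [Ring.lie_def, sub_apply, mul_apply_eq_zero_of_support hA hB h,
      mul_apply_eq_zero_of_support hB hA h, sub_zero]

lemma mem_supportLieSubalgebra [DecidableEq ι] {R : ι → ι → Prop} [IsTrans ι R]
    {A : Matrix ι ι K} :
    A ∈ supportLieSubalgebra R ↔ ∀ p q, ¬ R p q → A p q = 0 :=
  Iff.rfl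

end Matrix

section LinearAlgebra

variable {ι K : Type*} [Fintype ι] [DecidableEq ι] [Field K]

lemma card_sub_one_le_finrank_of_single_sub_single_mem (W : Submodule K (ι → K))
    (hW : ∀ i j, Pi.single i 1 - Pi.single j 1 ∈ W) :
    Fintype.card ι - 1 ≤ Module.finrank K W := by
  cases isEmpty_or_nonempty ι with
  | inl _ => simp
  | inr _ =>
    obtain ⟨z⟩ := ‹Nonempty ι›
    have htop : W ⊔ K ∙ (Pi.single z 1 : ι → K) = ⊤ := by
      rw [eq_top_iff, ← (Pi.basisFun K ι).span_eq, Submodule.span_le]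
      rintro _ ⟨j, rfl⟩
      rw [Pi.basisFun_apply, ← sub_sub_cancel (Pi.single z 1) (Pi.single j 1)]
      exact Submodule.sub_mem _
        (Submodule.mem_sup_right (Submodule.mem_span_singleton_self _))
        (Submodule.mem_sup_left (hW z j))
    have hsingle : Module.finrank K (K ∙ (Pi.single z 1 : ι → K)) = 1 :=
      finrank_span_singleton (Pi.single_ne_zero_iff.mpr one_ne_zero)
    have := Submodule.finrank_add_le_finrank_add_finrank W (K ∙ (Pi.single z 1 : ι → K))
    rw [htop, finrank_top, Module.finrank_fintype_fun_eq_card, hsingle] at this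
    omega

end LinearAlgebra

section Omega

variable {n : ℕ}

lemma Omega_transpose (i j : Fin n) : (Omega i j)ᵀ = -Omega i j := by
  rw [Omega, transpose_sub, transpose_single, transpose_single, neg_sub]

lemma Omega_mulVec_one (i j : Fin n) :
    Omega i j *ᵥ 1 = Pi.single i 1 - Pi.single j 1 := by
  ext k
  simp [Omega, sub_mulVec, single_mulVec, Pi.single_apply, Function.update_apply]

lemma Omega_mem_supportLieSubalgebra {R : Fin n → Fin n → Prop} [IsTrans (Fin n) R]
    {i j : Fin n} (hij : R i j) (hji : R j i) : Omega i j ∈ supportLieSubalgebra R := by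
  rw [mem_supportLieSubalgebra]
  intro p q hpq
  rw [Omega, Matrix.sub_apply, single_apply_of_ne, single_apply_of_ne, sub_zero]
  · rintro ⟨rfl, rfl⟩; exact hpq hji
  · rintro ⟨rfl, rfl⟩; exact hpq hij

lemma rel_of_Omega_mem_supportLieSubalgebra {R : Fin n → Fin n → Prop} [IsTrans (Fin n) R]
    {i j : Fin n} (hij : i ≠ j) (h : Omega i j ∈ supportLieSubalgebra R) : R i j := by
  by_contra hR'
  have := mem_supportLieSubalgebra.mp h i j hR'
  rw [Omega, Matrix.sub_apply, single_apply_same, single_apply_of_ne _ _ _ _ _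
    fun h => hij h.1.symm] at this
  norm_num at this

end Omega

theorem stmt15 {n : ℕ} (Γ : Finset (Matrix (Fin n) (Fin n) ℝ))
    (hΓ : ∀ M ∈ Γ, ∃ i j : Fin n, i < j ∧ M = Omega i j)
    (hgen : (LieSubalgebra.lieSpan ℝ (Matrix (Fin n) (Fin n) ℝ)
        (Γ : Set (Matrix (Fin n) (Fin n) ℝ)) : Set (Matrix (Fin n) (Fin n) ℝ)) =
      {A : Matrix (Fin n) (Fin n) ℝ | Aᵀ = -A}) :
    n - 1 ≤ Γ.card := by
  classical
  set W := Submodule.span ℝ ((Γ.image (· *ᵥ 1) : Finset (Fin n → ℝ)) : Set (Fin n → ℝ))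
  let R : Fin n → Fin n → Prop := fun i j => Pi.single i 1 - Pi.single j 1 ∈ W
  have : IsTrans (Fin n) R := ⟨fun i j k hij hjk => by
    simpa only [sub_add_sub_cancel] using W.add_mem hij hjk⟩
  have hΓR : ∀ M ∈ Γ, M ∈ supportLieSubalgebra R := by
    intro M hM
    obtain ⟨i, j, -, rfl⟩ := hΓ M hM
    have hij : R i j := by
      change Pi.single i 1 - Pi.single j 1 ∈ W
      rw [← Omega_mulVec_one]
      exact Submodule.subset_span (Finset.mem_coe.mpr (Finset.mem_image_of_mem _ hM))
    exact Omega_mem_supportLieSubalgebra hij (by simpa only [R, neg_sub] using W.neg_mem hij)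
  have hR_total : ∀ i j, R i j := by
    intro i j
    rcases eq_or_ne i j with rfl | hij
    · simp [R]
    have hmem : Omega i j ∈ LieSubalgebra.lieSpan ℝ _ (Γ : Set (Matrix (Fin n) (Fin n) ℝ)) := by
      rw [← SetLike.mem_coe, hgen]; exact Omega_transpose i j
    exact rel_of_Omega_mem_supportLieSubalgebra hij (LieSubalgebra.lieSpan_le.mpr hΓR hmem)
  calc n - 1 = Fintype.card (Fin n) - 1 := by rw [Fintype.card_fin]
    _ ≤ Module.finrank ℝ W := card_sub_one_le_finrank_of_single_sub_single_mem W hR_total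
    _ ≤ (Γ.image (· *ᵥ 1)).card := finrank_span_finset_le_card _
    _ ≤ Γ.card := Finset.card_image_le
end

section
/- Let Γ and Σ be subsets of the standard basis {Ω_ij : 1 ≤ i < j ≤ n} of so(n) with Σ ⊆ Γ, and suppose Σ has exactly n−1 elements whose associated graph on {1,…,n} is a spanning tree. Then the Lie algebra generated by Σ is so(n), and hence the Lie algebra generated by Γ is so(n). -/
open Matrix
attribute [local instance 100] LieRing.ofAssociativeRing

/-!
Since `⁅Ω i k, Ω k j⁆ = Ω i j` for distinct `i, k, j`, bracketing along a path of the tree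
produces every `Ω i j`, and these span `so(n)`: a skew matrix `A` is `½ ∑ A i j • Ω i j`.
-/

open LieAlgebra.Orthogonal

namespace Omega

variable {n : ℕ}

lemma self (i : Fin n) : Omega i i = 0 := sub_self _

lemma swap (i j : Fin n) : Omega j i = -Omega i j := (neg_sub _ _).symm

lemma mem_so (i j : Fin n) : Omega i j ∈ so (Fin n) ℝ := by
  simp [LieAlgebra.Orthogonal.mem_so, Omega]

lemma lie_of_ne {i k j : Fin n} (hik : i ≠ k) (hkj : k ≠ j) (hij : i ≠ j) :
    ⁅Omega i k, Omega k j⁆ = Omega i j := by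
  simp only [Ring.lie_def, Omega, sub_mul, mul_sub, single_mul_single_same, one_mul,
    single_mul_single_of_ne _ _ _ _ hik, single_mul_single_of_ne _ _ _ _ hkj,
    single_mul_single_of_ne _ _ _ _ hij, single_mul_single_of_ne _ _ _ _ hij.symm,
    single_mul_single_of_ne _ _ _ _ hik.symm, single_mul_single_of_ne _ _ _ _ hkj.symm]
  abel

lemma sum_smul_eq_sub_transpose (A : Matrix (Fin n) (Fin n) ℝ) :
    ∑ i, ∑ j, A i j • Omega i j = A - Aᵀ := by
  ext a b
  simp [Omega, Matrix.sum_apply, single_apply, mul_sub, Finset.sum_sub_distrib, ite_and]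

end Omega

section Connected

variable {n : ℕ} (L : LieSubalgebra ℝ (Matrix (Fin n) (Fin n) ℝ))

lemma Omega_mem_of_walk {G : SimpleGraph (Fin n)} (hG : ∀ i j, G.Adj i j → Omega i j ∈ L)
    {i j : Fin n} (w : G.Walk i j) : Omega i j ∈ L := by
  induction w with
  | nil => rw [Omega.self]; exact L.zero_mem
  | @cons a k c hak _ ih =>
    by_cases hac : a = c
    · subst hac; rw [Omega.self]; exact L.zero_mem
    by_cases hkc : k = c
    · subst hkc; exact hG _ _ hak
    rw [← Omega.lie_of_ne hak.ne hkc hac]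
    exact L.lie_mem (hG _ _ hak) ih

lemma so_le_of_connected {G : SimpleGraph (Fin n)} (hG : ∀ i j, G.Adj i j → Omega i j ∈ L)
    (hconn : G.Connected) : so (Fin n) ℝ ≤ L := by
  intro A hA
  have hsum : A = (2 : ℝ)⁻¹ • ∑ i, ∑ j, A i j • Omega i j := by
    rw [Omega.sum_smul_eq_sub_transpose, (mem_so _ _ A).mp hA, sub_neg_eq_add, ← two_smul ℝ A,
      smul_smul, inv_mul_cancel₀ two_ne_zero, one_smul]
  rw [hsum]
  exact L.smul_mem _ <| sum_mem fun i _ => sum_mem fun j _ =>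
    L.smul_mem _ (Omega_mem_of_walk L hG (hconn.preconnected i j).some)

lemma lieSpan_eq_so_of_connected {S : Set (Matrix (Fin n) (Fin n) ℝ)}
    (hS : S ⊆ so (Fin n) ℝ) (hconn : (SimpleGraph.fromRel fun i j => Omega i j ∈ S).Connected) :
    LieSubalgebra.lieSpan ℝ _ S = so (Fin n) ℝ := by
  refine le_antisymm (LieSubalgebra.lieSpan_le.mpr hS) (so_le_of_connected _ ?_ hconn)
  rintro i j ⟨-, hij | hji⟩
  · exact LieSubalgebra.subset_lieSpan hij
  · simpa [Omega.swap j i] using LieSubalgebra.subset_lieSpan (R := ℝ) (L := Matrix _ _ ℝ) hji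

end Connected

theorem stmt19_general {n : ℕ} (Γ : Set (Matrix (Fin n) (Fin n) ℝ))
    (S : Finset (Matrix (Fin n) (Fin n) ℝ))
    (hΓ : Γ ⊆ {M | ∃ i j : Fin n, i < j ∧ M = Omega i j})
    (hSΓ : (S : Set (Matrix (Fin n) (Fin n) ℝ)) ⊆ Γ)
    (htree : (SimpleGraph.fromRel (fun i j : Fin n => Omega i j ∈ S)).IsTree) :
    ((LieSubalgebra.lieSpan ℝ (Matrix (Fin n) (Fin n) ℝ)
        (S : Set (Matrix (Fin n) (Fin n) ℝ)) : Set (Matrix (Fin n) (Fin n) ℝ)) =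
      {A : Matrix (Fin n) (Fin n) ℝ | Aᵀ = -A}) ∧
    ((LieSubalgebra.lieSpan ℝ (Matrix (Fin n) (Fin n) ℝ) Γ :
        Set (Matrix (Fin n) (Fin n) ℝ)) =
      {A : Matrix (Fin n) (Fin n) ℝ | Aᵀ = -A}) := by
  have hso : {A : Matrix (Fin n) (Fin n) ℝ | Aᵀ = -A} = so (Fin n) ℝ := by
    ext A; exact (mem_so _ _ A).symm
  have hΓso : Γ ⊆ so (Fin n) ℝ := fun M hM => by
    obtain ⟨i, j, -, rfl⟩ := hΓ hM
    exact Omega.mem_so i j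
  have hS : LieSubalgebra.lieSpan ℝ _ (S : Set _) = so (Fin n) ℝ :=
    lieSpan_eq_so_of_connected (hSΓ.trans hΓso) htree.connected
  have hΓ' : LieSubalgebra.lieSpan ℝ _ Γ = so (Fin n) ℝ :=
    le_antisymm (LieSubalgebra.lieSpan_le.mpr hΓso) (hS ▸ LieSubalgebra.lieSpan_mono hSΓ)
  rw [hso, hS, hΓ']
  exact ⟨rfl, rfl⟩

theorem stmt19 {n : ℕ} (Γ : Set (Matrix (Fin n) (Fin n) ℝ))
    (S : Finset (Matrix (Fin n) (Fin n) ℝ))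
    (hΓ : Γ ⊆ {M | ∃ i j : Fin n, i < j ∧ M = Omega i j})
    (hSΓ : (S : Set (Matrix (Fin n) (Fin n) ℝ)) ⊆ Γ)
    (hcard : S.card = n - 1)
    (htree : (SimpleGraph.fromRel (fun i j : Fin n => Omega i j ∈ S)).IsTree) :
    ((LieSubalgebra.lieSpan ℝ (Matrix (Fin n) (Fin n) ℝ)
        (S : Set (Matrix (Fin n) (Fin n) ℝ)) : Set (Matrix (Fin n) (Fin n) ℝ)) =
      {A : Matrix (Fin n) (Fin n) ℝ | Aᵀ = -A}) ∧
    ((LieSubalgebra.lieSpan ℝ (Matrix (Fin n) (Fin n) ℝ) Γ :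
        Set (Matrix (Fin n) (Fin n) ℝ)) =
      {A : Matrix (Fin n) (Fin n) ℝ | Aᵀ = -A}) :=
  stmt19_general Γ S hΓ hSΓ htree
end
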